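/- Let f : H → ℝ be bounded and H_R-Lipschitz with constant L, i.e. |f(x + Rv) − f(x)| ≤ L‖v‖_H for all x ∈ H, v ∈ H. Then for every ε > 0, every x ∈ H and every v ∈ H, the Lasry–Lions approximation f_ε satisfies |f_ε(x + Rv) − f_ε(x)| ≤ (1/ε)‖v‖_H² + 4√2 L ‖v‖_H. -/

import Mathlib

/-!
The Lasry–Lions approximation commutes with translations along the range of `R`, and it is
monotone and commutes with adding constants, hence is non-expansive for the sup distance between
bounded functions. Since `f` and its translate `y ↦ f (y + R v)` are within `L ‖v‖` of each
other, so are `f_ε (· + R v)` and `f_ε`, which is stronger than the claimed bound.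
-/

open Real
open scoped RealInnerProductSpace

/-- The Lasry–Lions approximation of `f` along the range of `R`:
`f_ε(x) := sup_v ( inf_u ( f(x + Ru − Rv) + ‖u‖²/(2ε) ) − ‖v‖²/ε )`. -/
noncomputable def lasryLions {H : Type*} [NormedAddCommGroup H] [InnerProductSpace ℝ H]
    (R : H →L[ℝ] H) (f : H → ℝ) (ε : ℝ) (x : H) : ℝ :=
  ⨆ v : H, ((⨅ u : H, (f (x + R u - R v) + ‖u‖ ^ 2 / (2 * ε))) - ‖v‖ ^ 2 / ε)

section LasryLions

variable {H : Type*} [NormedAddCommGroup H] [InnerProductSpace ℝ H] (R : H →L[ℝ] H) {ε : ℝ}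

lemma lasryLions_add_apply (f : H → ℝ) (ε : ℝ) (x a : H) :
    lasryLions R f ε (x + R a) = lasryLions R (fun y => f (y + R a)) ε x := by
  unfold lasryLions
  congr! 5 with v u
  beta_reduce
  rw [sub_add_eq_add_sub, add_right_comm x (R u)]

lemma bddBelow_lasryLions_inner {f : H → ℝ} (hf : BddBelow (Set.range f)) (hε : 0 ≤ ε)
    (x v : H) : BddBelow (Set.range fun u => f (x + R u - R v) + ‖u‖ ^ 2 / (2 * ε)) := by
  obtain ⟨m, hm⟩ := hf
  refine ⟨m, ?_⟩
  rintro _ ⟨u, rfl⟩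
  have hfu : m ≤ f (x + R u - R v) := hm ⟨_, rfl⟩
  have hquad : 0 ≤ ‖u‖ ^ 2 / (2 * ε) := by positivity
  linarith

lemma bddAbove_lasryLions_outer {g : H → ℝ} (hg : BddAbove (Set.range g))
    (hg' : BddBelow (Set.range g)) (hε : 0 ≤ ε) (x : H) :
    BddAbove (Set.range fun v =>
      (⨅ u, g (x + R u - R v) + ‖u‖ ^ 2 / (2 * ε)) - ‖v‖ ^ 2 / ε) := by
  obtain ⟨m, hm⟩ := hg
  refine ⟨m, ?_⟩
  rintro _ ⟨v, rfl⟩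
  have hinf : (⨅ u, g (x + R u - R v) + ‖u‖ ^ 2 / (2 * ε)) ≤ g (x - R v) := by
    refine ciInf_le_of_le (bddBelow_lasryLions_inner R hg' hε x v) 0 ?_
    simp
  have hgv : g (x - R v) ≤ m := hm ⟨_, rfl⟩
  have hquad : 0 ≤ ‖v‖ ^ 2 / ε := by positivity
  linarith

variable {R}

lemma lasryLions_le_add {f g : H → ℝ} {c : ℝ} (hf : BddBelow (Set.range f))
    (hg : BddAbove (Set.range g)) (hg' : BddBelow (Set.range g)) (hfg : ∀ y, f y ≤ g y + c)
    (hε : 0 ≤ ε) (x : H) :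
    lasryLions R f ε x ≤ lasryLions R g ε x + c := by
  have hinf : ∀ v, (⨅ u, f (x + R u - R v) + ‖u‖ ^ 2 / (2 * ε))
      ≤ (⨅ u, g (x + R u - R v) + ‖u‖ ^ 2 / (2 * ε)) + c := fun v => by
    rw [← sub_le_iff_le_add]
    refine le_ciInf fun u => ?_
    have hfu := ciInf_le (bddBelow_lasryLions_inner R hf hε x v) u
    linarith [hfg (x + R u - R v)]
  refine ciSup_le fun v => ?_
  have hgv := le_ciSup (bddAbove_lasryLions_outer R hg hg' hε x) v
  unfold lasryLions
  linarith [hinf v]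

lemma abs_lasryLions_sub_le {f g : H → ℝ} {c : ℝ} (hf : BddAbove (Set.range f))
    (hf' : BddBelow (Set.range f)) (hg : BddAbove (Set.range g)) (hg' : BddBelow (Set.range g))
    (hfg : ∀ y, |f y - g y| ≤ c) (hε : 0 ≤ ε) (x : H) :
    |lasryLions R f ε x - lasryLions R g ε x| ≤ c := by
  have hfg' y := abs_sub_le_iff.1 (hfg y)
  have hf_le := lasryLions_le_add (R := R) (c := c) hf' hg hg'
    (fun y => by linarith [(hfg' y).1]) hε x
  have hg_le := lasryLions_le_add (R := R) (c := c) hg' hf hf'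
    (fun y => by linarith [(hfg' y).2]) hε x
  exact abs_sub_le_iff.2 ⟨by linarith, by linarith⟩

end LasryLions

theorem stmt3_general
    {H : Type*} [NormedAddCommGroup H] [InnerProductSpace ℝ H]
    (R : H →L[ℝ] H)
    (f : H → ℝ) (hf_bdd : ∃ M, ∀ x, |f x| ≤ M)
    (L : ℝ)
    (hf_lip : ∀ (x v : H), |f (x + R v) - f x| ≤ L * ‖v‖) :
    ∀ ε > (0 : ℝ), ∀ (x v : H),
      |lasryLions R f ε (x + R v) - lasryLions R f ε x|
        ≤ (1 / ε) * ‖v‖ ^ 2 + 4 * Real.sqrt 2 * L * ‖v‖ := by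
  intro ε hε x v
  obtain ⟨M, hM⟩ := hf_bdd
  have hf_above : BddAbove (Set.range f) :=
    ⟨M, by rintro _ ⟨y, rfl⟩; exact (abs_le.1 (hM y)).2⟩
  have hf_below : BddBelow (Set.range f) :=
    ⟨-M, by rintro _ ⟨y, rfl⟩; exact (abs_le.1 (hM y)).1⟩
  have htrans : Set.range (fun y => f (y + R v)) ⊆ Set.range f :=
    Set.range_comp_subset_range (· + R v) f
  have hshift : |lasryLions R f ε (x + R v) - lasryLions R f ε x| ≤ L * ‖v‖ := by
    rw [lasryLions_add_apply]
    exact abs_lasryLions_sub_le (hf_above.mono htrans) (hf_below.mono htrans) hf_above hf_below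
      (fun y => hf_lip y v) hε.le x
  have hLv : 0 ≤ L * ‖v‖ := (abs_nonneg _).trans (hf_lip x v)
  have hquad : 0 ≤ (1 / ε) * ‖v‖ ^ 2 := by positivity
  calc _ ≤ L * ‖v‖ := hshift
    _ ≤ 4 * √2 * (L * ‖v‖) := le_mul_of_one_le_left hLv (by linarith [one_lt_sqrt_two])
    _ ≤ _ := by linarith

/-- For bounded `H_R`-Lipschitz `f` with constant `L`, the Lasry–Lions approximation
satisfies `|f_ε(x + Rv) − f_ε(x)| ≤ (1/ε)‖v‖² + 4√2 L ‖v‖`. -/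
theorem stmt3
    {H : Type*} [NormedAddCommGroup H] [InnerProductSpace ℝ H] [CompleteSpace H]
    [SecondCountableTopology H]
    (R : H →L[ℝ] H) (hR_sa : IsSelfAdjoint R)
    (hR_pos : ∀ x : H, 0 ≤ ⟪R x, x⟫)
    (hR_inj : Function.Injective R)
    (f : H → ℝ) (hf_bdd : ∃ M, ∀ x, |f x| ≤ M)
    (L : ℝ) (hL : 0 ≤ L)
    (hf_lip : ∀ (x v : H), |f (x + R v) - f x| ≤ L * ‖v‖) :
    ∀ ε > (0 : ℝ), ∀ (x v : H),
      |lasryLions R f ε (x + R v) - lasryLions R f ε x|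
        ≤ (1 / ε) * ‖v‖ ^ 2 + 4 * Real.sqrt 2 * L * ‖v‖ :=
  stmt3_general R f hf_bdd L hf_lip
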